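/- Let M be a compact manifold, V ⊆ M open, and ℱ a family of homeomorphisms of M such that the forward orbit of V under the semigroup generated by ℱ and the forward orbit of V under the semigroup generated by ℱ⁻¹ both equal M. If every measurable ℱ-invariant set has either zero or full Lebesgue measure in V, then the action of the semigroup generated by ℱ is ergodic on M with respect to the Lebesgue measure class; similarly, if for every x ∈ M the ℱ-orbit of x is dense in V, then the action is minimal on M. -/

import Mathlib

open MeasureTheory

noncomputable section

/-- `orbitN F V n`: points reachable from `V` by applying at most `n` maps from `F`. -/
def orbitN {M : Type*} [TopologicalSpace M] (F : Set (M ≃ₜ M)) (V : Set M) : ℕ → Set M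
  | 0 => V
  | n + 1 => orbitN F V n ∪ ⋃ f ∈ F, (f : M → M) '' orbitN F V n

/-- The orbit of `V` under the semigroup generated by `F`. -/
def orbit {M : Type*} [TopologicalSpace M] (F : Set (M ≃ₜ M)) (V : Set M) : Set M :=
  ⋃ n : ℕ, orbitN F V n

/-!
Call a point `A`-null if some neighbourhood of it meets `A` in a null set, i.e. if it lies
outside the support of `μ.restrict A`. For an almost invariant set `S`, being `S`-null is
invariant under the inverses of the maps of `F`, and being `Sᶜ`-null under the maps themselves.
So if `S` is null in `V`, every point of the backward orbit of `V` is `S`-null, and if `S` is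
conull in `V`, every point of the forward orbit is `Sᶜ`-null. Both orbits are all of `M`, and
by compactness finitely many null neighbourhoods cover `M`, so `S` is null or conull.
Minimality is the topological analogue: the closure of an orbit is forward invariant, so it
contains the orbit of `V`.
-/

namespace Orbit

variable {M : Type*} [TopologicalSpace M] {F : Set (M ≃ₜ M)}

theorem subset_orbit (S : Set M) : S ⊆ orbit F S :=
  Set.subset_iUnion (orbitN F S) 0

theorem image_orbit_subset {f : M ≃ₜ M} (hf : f ∈ F) (S : Set M) :
    f '' orbit F S ⊆ orbit F S := by
  rintro _ ⟨x, hx, rfl⟩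
  obtain ⟨n, hn⟩ := Set.mem_iUnion.1 hx
  exact Set.mem_iUnion.2 ⟨n + 1, Or.inr (Set.mem_biUnion hf ⟨x, hn, rfl⟩)⟩

theorem image_subset_orbit {f : M ≃ₜ M} (hf : f ∈ F) (S : Set M) : f '' S ⊆ orbit F S :=
  (Set.image_mono (subset_orbit S)).trans (image_orbit_subset hf S)

theorem orbit_subset_of_image_subset {V T : Set M} (hVT : V ⊆ T)
    (hT : ∀ f ∈ F, f '' T ⊆ T) : orbit F V ⊆ T := by
  refine Set.iUnion_subset fun n => ?_
  induction n with
  | zero => exact hVT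
  | succ n ih =>
    refine Set.union_subset ih (Set.iUnion₂_subset fun f hf => ?_)
    exact (Set.image_mono ih).trans (hT f hf)

theorem dense_orbit_of_subset_closure {V S : Set M} (hV : orbit F V = Set.univ)
    (hVS : V ⊆ closure (orbit F S)) : Dense (orbit F S) := by
  refine dense_iff_closure_eq.2 (Set.eq_univ_of_univ_subset (hV ▸ ?_))
  refine orbit_subset_of_image_subset hVS fun f hf => ?_
  exact (image_closure_subset_closure_image f.continuous).trans
    (closure_mono (image_orbit_subset hf S))

theorem compl_diff_image_compl_subset {f : M ≃ₜ M} (hf : f ∈ F) (S : Set M) :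
    Sᶜ \ f '' Sᶜ ⊆ orbit F S \ S := by
  rw [f.image_compl, Set.sdiff_compl, Set.inter_comm, ← Set.sdiff_eq]
  exact Set.sdiff_subset_sdiff_left (image_subset_orbit hf S)

theorem diff_image_symm_subset {f : M ≃ₜ M} (hf : f ∈ F) (S : Set M) :
    S \ f.symm '' S ⊆ f ⁻¹' (orbit F S \ S) := by
  rintro x ⟨hxS, hx⟩
  refine ⟨image_subset_orbit hf S ⟨x, hxS, rfl⟩, fun hfx => hx ⟨f x, hfx, ?_⟩⟩
  exact f.symm_apply_apply x

end Orbit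

section NullNeighbourhoods

variable {M : Type*} [TopologicalSpace M] [MeasurableSpace M] {μ : Measure M}

theorem Homeomorph.quasiMeasurePreserving_of_image_null_iff [BorelSpace M] {f : M ≃ₜ M}
    (hf : ∀ S : Set M, MeasurableSet S → (μ S = 0 ↔ μ (f '' S) = 0)) :
    Measure.QuasiMeasurePreserving f μ μ := by
  refine ⟨f.continuous.measurable, Measure.AbsolutelyContinuous.mk fun s hs hs0 => ?_⟩
  rw [Measure.map_apply f.continuous.measurable hs]
  rwa [hf _ (hs.preimage f.continuous.measurable), Set.image_preimage_eq _ f.surjective]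

theorem Homeomorph.quasiMeasurePreserving_symm_of_image_null_iff [BorelSpace M] {f : M ≃ₜ M}
    (hf : ∀ S : Set M, MeasurableSet S → (μ S = 0 ↔ μ (f '' S) = 0)) :
    Measure.QuasiMeasurePreserving f.symm μ μ := by
  refine ⟨f.symm.continuous.measurable, Measure.AbsolutelyContinuous.mk fun s hs hs0 => ?_⟩
  rwa [Measure.map_apply f.symm.continuous.measurable hs, ← f.image_eq_preimage_symm, ← hf s hs]

variable [OpensMeasurableSpace M]

theorem image_compl_support_restrict_subset {g : M ≃ₜ M}
    (hg : Measure.QuasiMeasurePreserving g.symm μ μ) {A : Set M} (hA : μ (A \ g '' A) = 0) :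
    g '' (μ.restrict A).supportᶜ ⊆ (μ.restrict A).supportᶜ := by
  rintro _ ⟨x, hx, rfl⟩
  obtain ⟨U, ⟨hxU, hU⟩, hUA⟩ := (nhds_basis_opens x).notMem_measureSupport.1 hx
  rw [Measure.restrict_apply hU.measurableSet] at hUA
  have hgU : IsOpen (g '' U) := g.isOpenMap U hU
  refine Measure.subset_compl_support_of_isOpen hgU ?_ ⟨x, hxU, rfl⟩
  rw [Measure.restrict_apply hgU.measurableSet]
  have hsub : g '' U ∩ A ⊆ g '' (U ∩ A) ∪ (A \ g '' A) := by
    rintro _ ⟨⟨y, hyU, rfl⟩, hyA⟩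
    by_cases hy : y ∈ A
    · exact Or.inl ⟨y, ⟨hyU, hy⟩, rfl⟩
    · exact Or.inr ⟨hyA, fun ⟨z, hz, hzy⟩ => hy (g.injective hzy ▸ hz)⟩
  refine measure_mono_null hsub (measure_union_null ?_ hA)
  rw [g.image_eq_preimage_symm]
  exact hg.preimage_null hUA

theorem measure_eq_zero_of_orbit_eq_univ [CompactSpace M] {G : Set (M ≃ₜ M)} {V A : Set M}
    (hV : IsOpen V) (hG : orbit G V = Set.univ) (hVA : μ (V ∩ A) = 0)
    (hAG : ∀ g ∈ G, Measure.QuasiMeasurePreserving g.symm μ μ ∧ μ (A \ g '' A) = 0) :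
    μ A = 0 := by
  have hV0 : V ⊆ (μ.restrict A).supportᶜ :=
    Measure.subset_compl_support_of_isOpen hV (by rwa [Measure.restrict_apply hV.measurableSet])
  have hcover : Set.univ ⊆ (μ.restrict A).supportᶜ := hG ▸
    Orbit.orbit_subset_of_image_subset hV0 fun g hg =>
      image_compl_support_restrict_subset (hAG g hg).1 (hAG g hg).2
  rw [← Measure.restrict_apply_univ]
  exact Measure.measure_eq_zero_of_isCompact_subset_compl_support isCompact_univ hcover

end NullNeighbourhoods

theorem stmt19_general {M : Type*} [TopologicalSpace M] [CompactSpace M] [MeasurableSpace M]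
    [BorelSpace M] (μ : Measure M)
    (F : Set (M ≃ₜ M)) (V : Set M) (hV : IsOpen V)
    (hns : ∀ f ∈ F, ∀ S : Set M, MeasurableSet S →
      (μ S = 0 ↔ μ ((f : M → M) '' S) = 0))
    (hfwd : orbit F V = Set.univ)
    (hbwd : orbit (Homeomorph.symm '' F) V = Set.univ) :
    ((∀ S : Set M, MeasurableSet S → μ (orbit F S \ S) = 0 →
        μ (S ∩ V) = 0 ∨ μ (V \ S) = 0) →
      ∀ S : Set M, MeasurableSet S → μ (orbit F S \ S) = 0 → 0 < μ S → μ Sᶜ = 0) ∧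
    ((∀ x : M, V ⊆ closure (orbit F {x})) → ∀ x : M, Dense (orbit F {x})) := by
  refine ⟨fun hyp S hS hinv hpos => ?_,
    fun hdense x => Orbit.dense_orbit_of_subset_closure hfwd (hdense x)⟩
  rcases hyp S hS hinv with hSV | hVS
  · refine absurd (measure_eq_zero_of_orbit_eq_univ hV hbwd (by rwa [Set.inter_comm]) ?_)
      hpos.ne'
    rintro _ ⟨f, hf, rfl⟩
    have hqmp := Homeomorph.quasiMeasurePreserving_of_image_null_iff (hns f hf)
    exact ⟨hqmp,
      measure_mono_null (Orbit.diff_image_symm_subset hf S) (hqmp.preimage_null hinv)⟩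
  · refine measure_eq_zero_of_orbit_eq_univ hV hfwd (by rwa [← Set.sdiff_eq]) fun f hf => ?_
    exact ⟨Homeomorph.quasiMeasurePreserving_symm_of_image_null_iff (hns f hf),
      measure_mono_null (Orbit.compl_diff_image_compl_subset hf S) hinv⟩

/-- Let `M` be compact, `V ⊆ M` open, and `F` a family of homeomorphisms,
nonsingular with respect to the measure `μ` (the Lebesgue measure), such that the forward
orbits of `V` under the semigroups generated by `F` and by `F⁻¹` both equal `M`. If every
measurable `F`-invariant set has either zero or full `μ`-measure in `V`, then the
semigroup action of `F` is ergodic with respect to the measure class of `μ`; similarly,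
if every orbit is dense in `V`, the action is minimal. -/
theorem stmt19 {M : Type*} [TopologicalSpace M] [CompactSpace M] [MeasurableSpace M]
    [BorelSpace M] (μ : Measure M)
    (F : Set (M ≃ₜ M)) (V : Set M) (hV : IsOpen V) (hVne : V.Nonempty)
    (hns : ∀ f ∈ F, ∀ S : Set M, MeasurableSet S →
      (μ S = 0 ↔ μ ((f : M → M) '' S) = 0))
    (hfwd : orbit F V = Set.univ)
    (hbwd : orbit (Homeomorph.symm '' F) V = Set.univ) :
    ((∀ S : Set M, MeasurableSet S → μ (orbit F S \ S) = 0 →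
        μ (S ∩ V) = 0 ∨ μ (V \ S) = 0) →
      ∀ S : Set M, MeasurableSet S → μ (orbit F S \ S) = 0 → 0 < μ S → μ Sᶜ = 0) ∧
    ((∀ x : M, V ⊆ closure (orbit F {x})) → ∀ x : M, Dense (orbit F {x})) :=
  stmt19_general μ F V hV hns hfwd hbwd
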